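/- Let k, m ≥ 1, n = k + m, and let B be a k×n real matrix of the form B = D·[U | V], where D is a k×k diagonal matrix with positive diagonal entries d_1,…,d_k, U is a k×k upper-triangular matrix with all diagonal entries equal to 1, and V is a k×m real matrix. Assume: (i) the additive subgroup B(ℤ^n) of ℝ^k is discrete; (ii) for all i ≠ j, the (i,j) entry of [U|V]·[U|V]ᵀ is rational (equivalently, the inner product of the i-th and j-th rows of B equals d_i·d_j·q_{ij} with q_{ij} ∈ ℚ); and (iii) every diagonal entry of B·Bᵀ is rational. Then the Gram matrix Bᵀ·B has all entries in ℚ (in particular, all pairwise inner products of the columns of B are rational). -/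

import Mathlib

/-!
The columns of `D * U` lie in the discrete group `L = B(ℤⁿ)` and form an `ℝ`-basis of `ℝᵏ`, so
`L` is a full lattice whose `ℚ`-span is spanned by them; hence `V = U * C` with `C` rational.
Then `[U|V] * [U|V]ᵀ = U * S * Uᵀ` with `S = 1 + C * Cᵀ` rational and positive definite. Going up
from the last row, the off-diagonal entries of `U * S * Uᵀ` in row `i` form an invertible
rational linear system for the unknown entries of row `i` of `U`, so `U` is rational. Finally the
squared norm of row `i` of `[U|V]` is rational and nonzero, so the diagonal condition makes each
`dᵢ²` rational, and `Bᵀ * B = [U|V]ᵀ * D² * [U|V]`.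
-/

open Matrix Module Submodule

theorem Finset.sum_eq_add_sum_subtype_gt {ι M : Type*} [Fintype ι] [LinearOrder ι]
    [AddCommMonoid M] (g : ι → M) (i : ι) (hg : ∀ a < i, g a = 0) :
    ∑ a, g a = g i + ∑ a : {a // i < a}, g a := by
  rw [← Finset.sum_filter_of_ne (p := fun a => i ≤ a) fun a _ h => not_lt.1 (mt (hg a) h)]
  have : Finset.univ.filter (fun a => i ≤ a) = insert i (Finset.univ.filter (fun a => i < a)) := by
    ext a; simp [le_iff_eq_or_lt, eq_comm]
  rw [this, Finset.sum_insert (by simp), Finset.sum_subtype (p := (i < ·)) _ fun a => by simp]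

theorem mem_fieldRange_ratCastHom_iff {F : Type*} [Field F] [CharZero F] {x : F} :
    x ∈ (Rat.castHom F).fieldRange ↔ ∃ q : ℚ, x = q := by
  simp [eq_comm]

theorem Matrix.range_mulVec_intCast {ι κ R : Type*} [Fintype κ] [CommRing R] (B : Matrix ι κ R) :
    (Set.range fun a : κ → ℤ => B *ᵥ fun j => (a j : R)) = span ℤ (Set.range Bᵀ) := by
  rw [← Fintype.range_linearCombination ℤ (Bᵀ : κ → ι → R)]
  ext x
  simp only [Set.mem_range, SetLike.mem_coe, LinearMap.mem_range, mulVec_eq_sum, op_smul_eq_smul,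
    Int.cast_smul_eq_zsmul]
  rfl

theorem ZLattice.subset_span_rat {E ι : Type*} [NormedAddCommGroup E] [NormedSpace ℝ E]
    [FiniteDimensional ℝ E] [Module ℚ E] [IsScalarTower ℚ ℝ E] [Fintype ι]
    (L : Submodule ℤ E) [DiscreteTopology L] {v : ι → E} (hv : LinearIndependent ℝ v)
    (hcard : Fintype.card ι = finrank ℝ E) (hvL : ∀ i, v i ∈ L) :
    (L : Set E) ⊆ span ℚ (Set.range v) := by
  have : IsZLattice ℝ L := ⟨by
    rw [eq_top_iff, ← hv.span_eq_top_of_card_eq_finrank' hcard]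
    exact span_mono (Set.range_subset_iff.2 hvL)⟩
  let b := (Module.Free.chooseBasis ℤ L).ofZLatticeBasis ℝ L
  have hLb : (L : Set E) ⊆ span ℚ (Set.range b) := by
    intro x hx
    rw [← (Module.Free.chooseBasis ℤ L).ofZLatticeBasis_span ℝ] at hx
    exact span_le_restrictScalars ℤ ℚ _ hx
  have : FiniteDimensional ℚ (span ℚ (Set.range b)) := .span_of_finite ℚ (Set.finite_range b)
  have hvb : span ℚ (Set.range v) = span ℚ (Set.range b) := by
    refine eq_of_le_of_finrank_le (span_le.2 (Set.range_subset_iff.2 fun i => hLb (hvL i))) ?_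
    rw [finrank_span_eq_card (hv.restrict_scalars' ℚ), hcard, finrank_eq_card_basis b]
    exact finrank_range_le_card b
  rwa [hvb]

namespace Matrix

section Subring

variable {ι κ μ R S : Type*} [Fintype ι]

theorem mul_apply_mem [NonUnitalNonAssocSemiring R] [SetLike S R]
    [NonUnitalSubsemiringClass S R] (K : S) {A : Matrix μ ι R} {B : Matrix ι κ R}
    (hA : ∀ i j, A i j ∈ K) (hB : ∀ i j, B i j ∈ K) (i : μ) (j : κ) : (A * B) i j ∈ K :=
  sum_mem fun l _ => mul_mem (hA i l) (hB l j)

variable [DecidableEq ι] [CommRing R] [SetLike S R] [SubringClass S R] (K : S)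
  {A : Matrix ι ι R}

theorem det_mem (hA : ∀ i j, A i j ∈ K) : A.det ∈ K :=
  (SubringClass.subtype K).map_det (of fun i j => (⟨A i j, hA i j⟩ : K)) ▸ SetLike.coe_mem _

theorem adjugate_apply_mem (hA : ∀ i j, A i j ∈ K) (i j : ι) : A.adjugate i j ∈ K :=
  congrFun (congrFun ((SubringClass.subtype K).map_adjugate (of fun i j => (⟨A i j, hA i j⟩ : K)))
    i) j ▸ SetLike.coe_mem _

end Subring

theorem mem_of_vecMul_mem {ι F : Type*} [Fintype ι] [DecidableEq ι] [Field F] (K : Subfield F)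
    {A : Matrix ι ι F} (hA : ∀ i j, A i j ∈ K) (hdet : A.det ≠ 0) {x : ι → F}
    (hx : ∀ j, (x ᵥ* A) j ∈ K) (i : ι) : x i ∈ K := by
  have hinv : ∀ i j, A⁻¹ i j ∈ K := fun i j => by
    rw [inv_def, smul_apply, smul_eq_mul, Ring.inverse_eq_inv']
    exact mul_mem (inv_mem (det_mem K hA)) (adjugate_apply_mem K hA i j)
  have hsol : x = (x ᵥ* A) ᵥ* A⁻¹ := by
    rw [vecMul_vecMul, mul_nonsing_inv _ (isUnit_iff_ne_zero.2 hdet), vecMul_one]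
  rw [hsol]
  exact sum_mem fun j _ => mul_mem (hx j) (hinv j i)

theorem posDef_one_add_mul_transpose {ι κ : Type*} [Fintype ι] [DecidableEq ι] [Fintype κ]
    (C : Matrix ι κ ℝ) : (1 + C * Cᵀ).PosDef := by
  simpa [conjTranspose_eq_transpose_of_trivial] using
    PosDef.one.add_posSemidef (posSemidef_self_mul_conjTranspose C)

theorem mul_transpose_self_apply_ne_zero {ι κ R : Type*} [Fintype κ] [Ring R] [LinearOrder R]
    [IsStrictOrderedRing R] {M : Matrix ι κ R} {i : ι} {t : κ} (h : M i t ≠ 0) :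
    (M * Mᵀ) i i ≠ 0 :=
  (Finset.sum_pos' (fun s _ => mul_self_nonneg (M i s))
    ⟨t, Finset.mem_univ t, mul_self_pos.2 h⟩).ne'

theorem fromCols_mul_transpose_fromCols_mul {ι κ R : Type*} [Fintype ι] [DecidableEq ι]
    [Fintype κ] [CommRing R] (U : Matrix ι ι R) (C : Matrix ι κ R) :
    fromCols U (U * C) * (fromCols U (U * C))ᵀ = U * (1 + C * Cᵀ) * Uᵀ := by
  rw [transpose_fromCols, fromCols_mul_fromRows, transpose_mul, Matrix.mul_add, Matrix.mul_one,
    Matrix.add_mul, Matrix.mul_assoc, Matrix.mul_assoc, Matrix.mul_assoc]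

theorem exists_eq_mul_map_ratCast_of_discreteTopology {ι κ : Type*} [Fintype ι] [DecidableEq ι]
    [Fintype κ] {A : Matrix ι ι ℝ} (hA : IsUnit A) (W : Matrix ι κ ℝ)
    (hdisc : DiscreteTopology
      (Set.range fun a : ι ⊕ κ → ℤ => fromCols A W *ᵥ fun j => (a j : ℝ))) :
    ∃ C : Matrix ι κ ℚ, W = A * C.map (Rat.cast : ℚ → ℝ) := by
  rw [range_mulVec_intCast] at hdisc
  have hsub := ZLattice.subset_span_rat (span ℤ (Set.range (fromCols A W)ᵀ)) (v := Aᵀ)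
    (linearIndependent_cols_iff_isUnit.2 hA) (by simp)
    fun i => subset_span ⟨Sum.inl i, by ext; simp⟩
  choose c hc using fun j =>
    (mem_span_range_iff_exists_fun ℚ).1 (hsub (subset_span ⟨Sum.inr j, rfl⟩))
  refine ⟨of fun i j => c j i, Matrix.ext fun p j => ?_⟩
  rw [Matrix.mul_apply]
  simpa [Finset.sum_apply, Rat.smul_def, mul_comm] using (congrFun (hc j) p).symm

theorem exists_eq_mul_map_ratCast_of_discreteTopology_diagonal {ι κ : Type*} [Fintype ι]
    [DecidableEq ι] [Fintype κ] {d : ι → ℝ} (hd : ∀ i, d i ≠ 0) {A : Matrix ι ι ℝ}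
    (hA : IsUnit A) (W : Matrix ι κ ℝ)
    (hdisc : DiscreteTopology
      (Set.range fun a : ι ⊕ κ → ℤ => (diagonal d * fromCols A W) *ᵥ fun j => (a j : ℝ))) :
    ∃ C : Matrix ι κ ℚ, W = A * C.map (Rat.cast : ℚ → ℝ) := by
  have hD : IsUnit (diagonal d) := isUnit_diagonal.2 (Pi.isUnit_iff.2 fun i => (hd i).isUnit)
  rw [mul_fromCols] at hdisc
  obtain ⟨C, hC⟩ := exists_eq_mul_map_ratCast_of_discreteTopology (hD.mul hA) _ hdisc
  have hDdet := (isUnit_iff_isUnit_det _).1 hD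
  refine ⟨C, ?_⟩
  rw [← nonsing_inv_mul_cancel_left _ W hDdet, hC, Matrix.mul_assoc,
    nonsing_inv_mul_cancel_left _ _ hDdet]

section UpperTriangular

variable {ι : Type*} [Fintype ι] [LinearOrder ι] (K : Subfield ℝ) {S U : Matrix ι ι ℝ}

theorem IsUpperTriangular.row_mem_of_rows_gt_mem (hS : S.PosDef) (hSK : ∀ i j, S i j ∈ K)
    (hU1 : ∀ i, U i i = 1) (hUtri : U.IsUpperTriangular)
    (hUSU : ∀ i j, i < j → (U * S * Uᵀ) i j ∈ K) (i : ι)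
    (hrows : ∀ i', i < i' → ∀ j, U i' j ∈ K) (p : {a // i < a}) : U i p ∈ K := by
  classical
  set G : Matrix {a // i < a} {a // i < a} ℝ := (S * Uᵀ).submatrix Subtype.val Subtype.val
  have hG : G = S.submatrix Subtype.val Subtype.val * (U.submatrix Subtype.val Subtype.val)ᵀ := by
    ext p j
    simp only [G, submatrix_apply, mul_apply, transpose_apply]
    rw [Finset.sum_eq_add_sum_subtype_gt _ i fun b hb => by rw [hUtri (hb.trans j.2), mul_zero],
      hUtri j.2, mul_zero, zero_add]
  have hGdet : G.det ≠ 0 := by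
    have hUsub :
        (U.submatrix Subtype.val Subtype.val : Matrix {a // i < a} _ ℝ).IsUpperTriangular :=
      fun _ _ h => hUtri h
    rw [hG, det_mul, det_transpose, det_of_isUpperTriangular hUsub,
      Finset.prod_eq_one fun a _ => hU1 a.1, mul_one]
    exact (hS.submatrix Subtype.val_injective).det_pos.ne'
  have hGK : ∀ p j, G p j ∈ K := fun p j =>
    sum_mem fun b _ => mul_mem (hSK _ _) (hrows j j.2 b)
  have hx : ∀ j, ((fun p : {a // i < a} => U i p) ᵥ* G) j ∈ K := by
    intro j
    have h := hUSU i j j.2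
    rw [mul_assoc, mul_apply, Finset.sum_eq_add_sum_subtype_gt _ i
      fun a ha => by rw [hUtri ha, zero_mul], hU1, one_mul] at h
    have hi : (S * Uᵀ) i j ∈ K := sum_mem fun b _ => mul_mem (hSK _ _) (hrows j j.2 b)
    simpa [vecMul, dotProduct, G] using sub_mem h hi
  exact mem_of_vecMul_mem K hGK hGdet hx p

theorem IsUpperTriangular.mem_of_mul_mul_transpose_mem (hS : S.PosDef)
    (hSK : ∀ i j, S i j ∈ K) (hU1 : ∀ i, U i i = 1) (hUtri : U.IsUpperTriangular)
    (hUSU : ∀ i j, i < j → (U * S * Uᵀ) i j ∈ K) (i j : ι) : U i j ∈ K := by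
  induction i using WellFoundedGT.induction generalizing j with
  | _ i ih =>
    rcases lt_trichotomy j i with hji | rfl | hij
    · rw [hUtri hji]; exact zero_mem K
    · rw [hU1]; exact one_mem K
    · exact hUtri.row_mem_of_rows_gt_mem K hS hSK hU1 hUSU i ih ⟨j, hij⟩

end UpperTriangular

theorem transpose_mul_self_apply_mem {ι κ F : Type*} [Fintype ι] [Fintype κ] [DecidableEq ι]
    [Field F] (K : Subfield F) {d : ι → F} {M : Matrix ι κ F} (hMK : ∀ i t, M i t ∈ K)
    (hM0 : ∀ i, (M * Mᵀ) i i ≠ 0)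
    (hdiag : ∀ i, (diagonal d * M * (diagonal d * M)ᵀ) i i ∈ K) (p q : κ) :
    ((diagonal d * M)ᵀ * (diagonal d * M)) p q ∈ K := by
  have hd2 : ∀ i, d i * d i ∈ K := fun i => by
    have h : (diagonal d * M * (diagonal d * M)ᵀ) i i = d i * d i * (M * Mᵀ) i i := by
      rw [transpose_mul, diagonal_transpose, ← Matrix.mul_assoc, Matrix.mul_assoc (diagonal d) M,
        mul_diagonal, diagonal_mul]
      ring
    have := div_mem (hdiag i) (mul_apply_mem K (B := Mᵀ) hMK (fun t i => hMK i t) i i)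
    rwa [h, mul_div_cancel_right₀ _ (hM0 i)] at this
  have h : (diagonal d * M)ᵀ * (diagonal d * M) = Mᵀ * diagonal (fun i => d i * d i) * M := by
    rw [transpose_mul, diagonal_transpose, Matrix.mul_assoc, ← Matrix.mul_assoc (diagonal d),
      diagonal_mul_diagonal, ← Matrix.mul_assoc]
  rw [h]
  refine mul_apply_mem K (mul_apply_mem K (fun t i => hMK i t) fun i j => ?_) hMK p q
  rw [diagonal_apply]
  split_ifs
  exacts [hd2 i, zero_mem K]

end Matrix

theorem stmt_2_general (k m : ℕ)
    (d : Fin k → ℝ) (hd : ∀ i, 0 < d i)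
    (U : Matrix (Fin k) (Fin k) ℝ) (hU1 : ∀ i, U i i = 1)
    (hUtri : ∀ i j : Fin k, j < i → U i j = 0)
    (V : Matrix (Fin k) (Fin m) ℝ)
    (B : Matrix (Fin k) (Fin k ⊕ Fin m) ℝ)
    (hB : B = Matrix.diagonal d * Matrix.fromCols U V)
    (hdisc : DiscreteTopology
      ↥(Set.range fun a : Fin k ⊕ Fin m → ℤ => B.mulVec fun i => (a i : ℝ)))
    (hoff : ∀ i j : Fin k, i ≠ j → ∃ q : ℚ,
      ((Matrix.fromCols U V) * (Matrix.fromCols U V).transpose) i j = q)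
    (hdiag : ∀ i : Fin k, ∃ q : ℚ, (B * B.transpose) i i = q) :
    ∀ p q : Fin k ⊕ Fin m, ∃ r : ℚ, (B.transpose * B) p q = r := by
  subst hB
  set K := (Rat.castHom ℝ).fieldRange
  have hU : IsUnit U := by
    rw [isUnit_iff_isUnit_det, det_of_isUpperTriangular hUtri, Finset.prod_eq_one fun i _ => hU1 i]
    exact isUnit_one
  obtain ⟨C, rfl⟩ :=
    exists_eq_mul_map_ratCast_of_discreteTopology_diagonal (fun i => (hd i).ne') hU V hdisc
  set Cr := C.map (Rat.cast : ℚ → ℝ)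
  have hCK : ∀ i j, Cr i j ∈ K := fun i j => ⟨C i j, rfl⟩
  have hSK : ∀ i j, (1 + Cr * Crᵀ : Matrix (Fin k) (Fin k) ℝ) i j ∈ K := fun i j => by
    refine add_mem ?_ (mul_apply_mem K (B := Crᵀ) hCK (fun i j => hCK j i) i j)
    rw [one_apply]; split_ifs
    exacts [one_mem K, zero_mem K]
  have hUK := IsUpperTriangular.mem_of_mul_mul_transpose_mem K (posDef_one_add_mul_transpose Cr)
    hSK hU1 hUtri fun i j hij => by
      rw [← fromCols_mul_transpose_fromCols_mul]
      exact mem_fieldRange_ratCastHom_iff.2 (hoff i j hij.ne)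
  have hFK : ∀ i t, fromCols U (U * Cr) i t ∈ K := by
    rintro i (t | t)
    · exact hUK i t
    · exact mul_apply_mem K hUK hCK i t
  intro p q
  exact mem_fieldRange_ratCastHom_iff.1 <| transpose_mul_self_apply_mem K hFK
    (fun i => mul_transpose_self_apply_ne_zero (t := Sum.inl i) (by simp [hU1]))
    (fun i => mem_fieldRange_ratCastHom_iff.2 (hdiag i)) p q

/-- Rationality criterion for lattice-generating systems of vectors: if
`B = D * [U | V]` with `D` diagonal positive, `U` upper-triangular unipotent,
the integer span of the columns of `B` is discrete, the off-diagonal entries of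
`[U|V] * [U|V]ᵀ` are rational and the diagonal entries of `B * Bᵀ` are rational,
then all entries of the Gram matrix `Bᵀ * B` are rational. -/
theorem stmt_2 (k m : ℕ) (hk : 1 ≤ k) (hm : 1 ≤ m)
    (d : Fin k → ℝ) (hd : ∀ i, 0 < d i)
    (U : Matrix (Fin k) (Fin k) ℝ) (hU1 : ∀ i, U i i = 1)
    (hUtri : ∀ i j : Fin k, j < i → U i j = 0)
    (V : Matrix (Fin k) (Fin m) ℝ)
    (B : Matrix (Fin k) (Fin k ⊕ Fin m) ℝ)
    (hB : B = Matrix.diagonal d * Matrix.fromCols U V)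
    (hdisc : DiscreteTopology
      ↥(Set.range fun a : Fin k ⊕ Fin m → ℤ => B.mulVec fun i => (a i : ℝ)))
    (hoff : ∀ i j : Fin k, i ≠ j → ∃ q : ℚ,
      ((Matrix.fromCols U V) * (Matrix.fromCols U V).transpose) i j = q)
    (hdiag : ∀ i : Fin k, ∃ q : ℚ, (B * B.transpose) i i = q) :
    ∀ p q : Fin k ⊕ Fin m, ∃ r : ℚ, (B.transpose * B) p q = r :=
  stmt_2_general k m d hd U hU1 hUtri V B hB hdisc hoff hdiag
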